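/- arXiv:2208.01870 — 2 statements merged into one kernel-verified Lean document; each statement's English description precedes it below -/
import Mathlib

section
/- For all real x > 0 and x̃ > 0, sqrt(2x/(1+x)) ≤ q(x̃)·ln(1+x) + r(x̃), where q(x̃) = 1/sqrt(2x̃(1+x̃)) and r(x̃) = sqrt(2x̃/(1+x̃)) − q(x̃)·ln(1+x̃). -/
/-!
Since `2x/(1+x) = 2 - 2/(1+x)`, the bound is the tangent-line bound of the concave square root at
`s₀ = 2x̃/(1+x̃)`, followed by `1 - (1+x̃)/(1+x) ≤ ln(1+x) - ln(1+x̃)`; the slope `q(x̃)` is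
`1/((1+x̃)√s₀)`, the derivative of `√(2x/(1+x))` with respect to `ln(1+x)` at `x̃`.
-/

open Real

namespace Real

lemma sqrt_le_sqrt_add_sub_div (s : ℝ) {s₀ : ℝ} (hs : 0 ≤ s) (hs₀ : 0 < s₀) :
    √s ≤ √s₀ + (s - s₀) / (2 * √s₀) := by
  have hr₀ : 0 < √s₀ := sqrt_pos.mpr hs₀
  have amgm : 2 * √s₀ * √s ≤ s + s₀ := by
    nlinarith [sq_nonneg (√s - √s₀), sq_sqrt hs, sq_sqrt hs₀.le]
  rw [← sub_le_iff_le_add', le_div_iff₀ (by positivity)]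
  nlinarith [sq_sqrt hs₀.le]

lemma sub_div_one_add_le_log_sub {x y : ℝ} (hx : 0 < 1 + x) (hy : 0 < 1 + y) :
    (x - y) / (1 + x) ≤ log (1 + x) - log (1 + y) := by
  have h := one_sub_inv_le_log_of_pos (div_pos hx hy)
  rwa [log_div hx.ne' hy.ne', inv_div, one_sub_div hx.ne', add_sub_add_left_eq_sub] at h

end Real

/-- Tangent-line upper bound for the concave map `x ↦ √(2x/(1+x))`:
for all `x, x̃ > 0`, `√(2x/(1+x)) ≤ q(x̃)·ln(1+x) + r(x̃)` where
`q(x̃) = 1/√(2x̃(1+x̃))` and `r(x̃) = √(2x̃/(1+x̃)) − q(x̃)·ln(1+x̃)`. -/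
theorem stmt_0 (x xt : ℝ) (hx : 0 < x) (hxt : 0 < xt) :
    Real.sqrt (2 * x / (1 + x)) ≤
      (1 / Real.sqrt (2 * xt * (1 + xt))) * Real.log (1 + x) +
        (Real.sqrt (2 * xt / (1 + xt)) -
          (1 / Real.sqrt (2 * xt * (1 + xt))) * Real.log (1 + xt)) := by
  have h1x : 0 < 1 + x := by linarith
  have h1t : 0 < 1 + xt := by linarith
  set b := √(2 * xt / (1 + xt))
  have slope : √(2 * xt * (1 + xt)) = (1 + xt) * b := by
    rw [show 2 * xt * (1 + xt) = (1 + xt) ^ 2 * (2 * xt / (1 + xt)) by field_simp,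
      sqrt_mul (sq_nonneg _), sqrt_sq h1t.le]
  have chord : (2 * x / (1 + x) - 2 * xt / (1 + xt)) / (2 * b) =
      1 / √(2 * xt * (1 + xt)) * ((x - xt) / (1 + x)) := by
    rw [slope]
    field_simp
    ring
  calc √(2 * x / (1 + x))
      ≤ b + (2 * x / (1 + x) - 2 * xt / (1 + xt)) / (2 * b) :=
        sqrt_le_sqrt_add_sub_div _ (by positivity) (by positivity)
    _ = b + 1 / √(2 * xt * (1 + xt)) * ((x - xt) / (1 + x)) := by rw [chord]
    _ ≤ b + 1 / √(2 * xt * (1 + xt)) * (log (1 + x) - log (1 + xt)) := by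
        gcongr
        exact sub_div_one_add_le_log_sub h1x h1t
    _ = _ := by ring
end

section
/- The inverse Q-function Q^{-1}(x) is convex on the interval (0, 1/2). -/
/-- The Gaussian tail function `Q(x) = (1/√(2π)) ∫_x^∞ e^{−t²/2} dt`. -/
noncomputable def gaussQ (x : ℝ) : ℝ :=
  (1 / Real.sqrt (2 * Real.pi)) * ∫ t in Set.Ioi x, Real.exp (-(t ^ 2) / 2)

/-- The inverse of the Gaussian tail function. -/
noncomputable def gaussQinv : ℝ → ℝ := Function.invFun gaussQ

/-!
`Q` is strictly decreasing, and convex on `[0, ∞)` because its derivative `-e^{-x²/2}/√(2π)`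
increases there; it maps `[0, ∞)` onto `(0, 1/2]`. The inverse of a strictly decreasing convex
function is convex: if `p = Q x`, `q = Q y` and `Q w = a p + b q`, then convexity gives
`Q (a x + b y) ≤ Q w`, hence `w ≤ a x + b y`.
-/

open Set Filter MeasureTheory Real Topology

theorem ConvexOn.convexOn_of_strictAntiOn_of_leftInvOn {𝕜 E β : Type*} [Semiring 𝕜]
    [PartialOrder 𝕜] [AddCommMonoid E] [LinearOrder E] [Module 𝕜 E] [AddCommMonoid β]
    [PartialOrder β] [Module 𝕜 β] {s : Set E} {t : Set β} {f : E → β} {g : β → E}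
    (hf : ConvexOn 𝕜 s f) (hf_anti : StrictAntiOn f s) (hgf : LeftInvOn g f s)
    (ht : Convex 𝕜 t) (hft : SurjOn f s t) : ConvexOn 𝕜 t g := by
  refine ⟨ht, ?_⟩
  rintro _ hp _ hq a b ha hb hab
  obtain ⟨w, hw, hw_eq⟩ := hft (ht hp hq ha hb hab)
  obtain ⟨x, hx, rfl⟩ := hft hp
  obtain ⟨y, hy, rfl⟩ := hft hq
  rw [← hw_eq, hgf hw, hgf hx, hgf hy]
  exact (hf_anti.le_iff_ge (hf.1 hx hy ha hb hab) hw).1 (hw_eq ▸ hf.2 hx hy ha hb hab)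

lemma integrable_exp_neg_sq_div_two : Integrable fun t : ℝ => exp (-(t ^ 2) / 2) := by
  convert integrable_exp_neg_mul_sq (by norm_num : (0 : ℝ) < 1 / 2) using 2
  ring_nf

lemma integral_Ioi_zero_exp_neg_sq_div_two :
    ∫ t in Ioi (0 : ℝ), exp (-(t ^ 2) / 2) = √(2 * π) / 2 := by
  convert integral_gaussian_Ioi (1 / 2) using 3
  · ring_nf
  · ring_nf

lemma gaussQ_eq_half_sub (x : ℝ) :
    gaussQ x = 1 / 2 - 1 / √(2 * π) * ∫ t in (0 : ℝ)..x, exp (-(t ^ 2) / 2) := by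
  rw [← intervalIntegral.integral_Ioi_sub_Ioi' integrable_exp_neg_sq_div_two.integrableOn
    integrable_exp_neg_sq_div_two.integrableOn, integral_Ioi_zero_exp_neg_sq_div_two, gaussQ]
  field_simp
  ring

lemma hasDerivAt_gaussQ (x : ℝ) :
    HasDerivAt gaussQ (-(1 / √(2 * π) * exp (-(x ^ 2) / 2))) x := by
  have hcont : Continuous fun t : ℝ => exp (-(t ^ 2) / 2) := by fun_prop
  have hint := intervalIntegral.integral_hasDerivAt_right
    (integrable_exp_neg_sq_div_two.intervalIntegrable (a := 0) (b := x))
    (hcont.stronglyMeasurableAtFilter _ _) hcont.continuousAt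
  rw [funext gaussQ_eq_half_sub]
  exact ((hint.const_mul (1 / √(2 * π))).const_sub (1 / 2)).congr_deriv (by ring)

lemma gaussQ_strictAnti : StrictAnti gaussQ :=
  strictAnti_of_hasDerivAt_neg hasDerivAt_gaussQ fun x => by
    simp only [neg_lt_zero]
    positivity

lemma continuous_gaussQ : Continuous gaussQ :=
  continuous_iff_continuousAt.2 fun x => (hasDerivAt_gaussQ x).continuousAt

lemma gaussQ_zero : gaussQ 0 = 1 / 2 := by
  simp [gaussQ_eq_half_sub]

lemma tendsto_gaussQ_atTop : Tendsto gaussQ atTop (𝓝 0) := by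
  have h := ((intervalIntegral_tendsto_integral_Ioi 0
    integrable_exp_neg_sq_div_two.integrableOn tendsto_id).const_mul (1 / √(2 * π))).const_sub
    (1 / 2)
  have hlim : 1 / 2 - 1 / √(2 * π) * (√(2 * π) / 2) = 0 := by
    field_simp
    ring
  rw [integral_Ioi_zero_exp_neg_sq_div_two, hlim] at h
  rw [funext gaussQ_eq_half_sub]
  exact h

lemma convexOn_gaussQ : ConvexOn ℝ (Ici 0) gaussQ := by
  have hderiv : deriv gaussQ = fun x => -(1 / √(2 * π) * exp (-(x ^ 2) / 2)) :=
    funext fun x => (hasDerivAt_gaussQ x).deriv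
  refine MonotoneOn.convexOn_of_deriv (convex_Ici 0) continuous_gaussQ.continuousOn
    (fun x _ => (hasDerivAt_gaussQ x).differentiableAt.differentiableWithinAt) ?_
  rw [interior_Ici, hderiv]
  intro x hx y _ hxy
  dsimp only
  gcongr
  exact hx.le

lemma surjOn_gaussQ : SurjOn gaussQ (Ici 0) (Ioc 0 (1 / 2)) := by
  rw [← gaussQ_zero]
  exact isPreconnected_Ici.intermediate_value_Ioc self_mem_Ici
    (le_principal_iff.2 (Ici_mem_atTop 0)) continuous_gaussQ.continuousOn tendsto_gaussQ_atTop

/-- `Q⁻¹` is convex on `(0, 1/2)`. -/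
theorem stmt_5 : ConvexOn ℝ (Set.Ioo (0 : ℝ) (1 / 2)) gaussQinv :=
  convexOn_gaussQ.convexOn_of_strictAntiOn_of_leftInvOn (gaussQ_strictAnti.strictAntiOn _)
    (fun x _ => Function.leftInverse_invFun gaussQ_strictAnti.injective x) (convex_Ioo 0 (1 / 2))
    (surjOn_gaussQ.mono subset_rfl Ioo_subset_Ioc_self)
end
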